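/- Let j ≥ 0 be an integer. There exists a constant C₄ > 0 depending only on j such that for all integers n, s ≥ 1 with s ≤ n, every 0 < τ ≤ n^{−4j−5}, and every polynomial p ∈ P_s: ‖p − N_{n,j}‖²_{L²(I)} ≤ C₄ · n^{−2j−2} · ‖p‖²_{W^{j+1}(L²(I))}. -/

import Mathlib

open MeasureTheory

/-- The ReLU function. -/
noncomputable def relu (t : ℝ) : ℝ := max t 0

/-- The trapezoid function `T_{τ,a,b}`. -/
noncomputable def trap (τ a b t : ℝ) : ℝ :=
  τ⁻¹ * (relu (t - a + τ) - relu (t - a) - relu (t - b) + relu (t - b - τ))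

/-- The interval `I = [−1/2, 1/2]`. -/
def II : Set ℝ := Set.Icc (-(1/2)) (1/2)

/-- The grid point `t_k = −1/2 + k/n`. -/
noncomputable def tk (n k : ℕ) : ℝ := -(1/2) + (k : ℝ) / (n : ℝ)

/-- The degree-`j` Taylor polynomial `ψ_{j,a,p}` of a polynomial `p` at `a`. -/
noncomputable def psiP (j : ℕ) (a : ℝ) (p : Polynomial ℝ) (t : ℝ) : ℝ :=
  ∑ i ∈ Finset.range (j + 1),
    (Polynomial.derivative^[i] p).eval a * (t - a) ^ i / (i.factorial : ℝ)

/-- `N_{n,j}(t) = Σ_{k=1}^{n} ψ_{j,t_{k−1},p}(t) T_{τ,t_{k−1},t_k}(t)`. -/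
noncomputable def Nnj (n j : ℕ) (τ : ℝ) (p : Polynomial ℝ) (t : ℝ) : ℝ :=
  ∑ k ∈ Finset.Icc 1 n, psiP j (tk n (k - 1)) p t * trap τ (tk n (k - 1)) (tk n k) t

/-- The squared Sobolev norm `‖p‖²_{W^u(L²(I))} = Σ_{i=0}^{u} ‖p^{(i)}‖²_{L²(I)}`. -/
noncomputable def sobNormSq (u : ℕ) (p : Polynomial ℝ) : ℝ :=
  ∑ i ∈ Finset.range (u + 1), ∫ t in II, ((Polynomial.derivative^[i] p).eval t) ^ 2

/-! ### Auxiliary lemmas -/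

section Aux
open intervalIntegral
set_option linter.unnecessarySeqFocus false

lemma continuous_relu : Continuous relu := continuous_id.max continuous_const

lemma continuous_trap (τ a b : ℝ) : Continuous (trap τ a b) := by
  unfold trap
  have h : ∀ c : ℝ, Continuous fun t : ℝ => relu (t - c) :=
    fun c => continuous_relu.comp (continuous_id.sub continuous_const)
  exact continuous_const.mul ((((continuous_relu.comp ((continuous_id.sub continuous_const).add continuous_const)).sub (h a)).sub (h b)).add (continuous_relu.comp ((continuous_id.sub continuous_const).sub continuous_const)))

lemma relu_mono {x y : ℝ} (h : x ≤ y) : relu x ≤ relu y := max_le_max h le_rfl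

lemma relu_add_le (x τ : ℝ) (hτ : 0 ≤ τ) : relu (x + τ) ≤ relu x + τ := by
  unfold relu
  rcases le_total x 0 with h|h <;> rcases le_total (x+τ) 0 with h2|h2 <;>
    simp [max_eq_left, max_eq_right, *] <;> linarith

lemma relu_sub_mono {τ x y : ℝ} (hτ : 0 ≤ τ) (h : x ≤ y) :
    relu (x + τ) - relu x ≤ relu (y + τ) - relu y := by
  unfold relu
  rcases le_total x 0 with h1|h1 <;> rcases le_total y 0 with h2|h2 <;>
    rcases le_total (x+τ) 0 with h3|h3 <;> rcases le_total (y+τ) 0 with h4|h4 <;>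
    simp [max_eq_left, max_eq_right, *] <;> linarith

lemma trap_key (τ a b t : ℝ) :
    trap τ a b t = τ⁻¹ * ((relu (t - a + τ) - relu (t - a)) - (relu (t - b - τ + τ) - relu (t - b - τ))) := by
  unfold trap; ring_nf

lemma trap_nonneg {τ a b : ℝ} (hτ : 0 < τ) (hab : a ≤ b + τ) (t : ℝ) : 0 ≤ trap τ a b t := by
  rw [trap_key]
  have h := relu_sub_mono hτ.le (show t - b - τ ≤ t - a by linarith)
  exact mul_nonneg (inv_nonneg.2 hτ.le) (by linarith)

lemma trap_le_one {τ a b : ℝ} (hτ : 0 < τ) (t : ℝ) : trap τ a b t ≤ 1 := by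
  rw [trap_key]
  have h1 := relu_add_le (t - a) τ hτ.le
  have h2 := relu_mono (show t - b - τ ≤ t - b - τ + τ by linarith)
  rw [inv_mul_le_iff₀ hτ]
  linarith

lemma trap_eq_one {τ a b t : ℝ} (hτ : 0 < τ) (h1 : a ≤ t) (h2 : t ≤ b) : trap τ a b t = 1 := by
  unfold trap relu
  rw [max_eq_left (by linarith), max_eq_left (by linarith), max_eq_right (by linarith),
    max_eq_right (by linarith)]
  field_simp
  ring

lemma trap_eq_zero_left {τ a b t : ℝ} (hτ : 0 ≤ τ) (hab : a ≤ b) (h : t ≤ a - τ) : trap τ a b t = 0 := by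
  unfold trap relu
  rw [max_eq_right (by linarith), max_eq_right (by linarith), max_eq_right (by linarith),
    max_eq_right (by linarith)]
  ring

lemma trap_eq_zero_right {τ a b t : ℝ} (hτ : 0 < τ) (hab : a ≤ b) (h : b + τ ≤ t) :
    trap τ a b t = 0 := by
  unfold trap relu
  rw [max_eq_left (by linarith), max_eq_left (by linarith), max_eq_left (by linarith),
    max_eq_left (by linarith)]
  ring

/-- Cauchy–Schwarz for interval integrals. -/
lemma cs_int {a b : ℝ} (hab : a ≤ b) (f : ℝ → ℝ) (hf : Continuous f) :
    (∫ u in a..b, |f u|) ^ 2 ≤ (b - a) * ∫ u in a..b, (f u) ^ 2 := by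
  rcases eq_or_lt_of_le hab with rfl|hab'
  · simp
  set I := ∫ u in a..b, |f u| with hI
  set c : ℝ := I / (b - a) with hc
  have h0 : (0:ℝ) ≤ ∫ u in a..b, (|f u| - c) ^ 2 :=
    intervalIntegral.integral_nonneg hab (fun u _ => sq_nonneg _)
  have hint1 : IntervalIntegrable (fun u => |f u|) volume a b := hf.abs.intervalIntegrable a b
  have hint2 : IntervalIntegrable (fun u => (f u)^2) volume a b := (hf.pow 2).intervalIntegrable a b
  have hexp : ∫ u in a..b, (|f u| - c) ^ 2
      = (∫ u in a..b, (f u)^2) - 2*c*I + c^2*(b-a) := by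
    have : ∀ u : ℝ, (|f u| - c)^2 = (f u)^2 - (2*c) * |f u| + c^2 := by
      intro u; rw [sub_sq, sq_abs]; ring
    simp_rw [this]
    rw [intervalIntegral.integral_add (hint2.sub (hint1.const_mul _)) intervalIntegrable_const,
      intervalIntegral.integral_sub hint2 (hint1.const_mul _),
      intervalIntegral.integral_const_mul, intervalIntegral.integral_const, ← hI]
    simp only [smul_eq_mul]
    ring
  rw [hexp] at h0
  have hb : 0 < b - a := by linarith
  have hcb : c * (b - a) = I := by rw [hc]; field_simp
  have h2 : 2*c*I = 2 * (I^2/(b-a)) := by rw [hc]; field_simp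
  have h3 : c^2*(b-a) = I^2/(b-a) := by rw [hc]; field_simp
  rw [h2, h3] at h0
  have : I^2 / (b-a) ≤ ∫ u in a..b, (f u)^2 := by linarith
  calc I^2 = (b-a) * (I^2/(b-a)) := by field_simp
  _ ≤ (b-a) * ∫ u in a..b, (f u)^2 := by
      exact mul_le_mul_of_nonneg_left this hb.le

lemma psiP_self (j : ℕ) (a : ℝ) (p : Polynomial ℝ) : psiP j a p a = p.eval a := by
  unfold psiP
  rw [Finset.sum_eq_single 0]
  · simp
  · intro i _ hi
    simp [sub_self, zero_pow hi]
  · simp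

lemma continuous_psiP (j : ℕ) (a : ℝ) (p : Polynomial ℝ) : Continuous (psiP j a p) := by
  unfold psiP
  exact continuous_finset_sum _ fun i _ =>
    (continuous_const.mul ((continuous_id.sub continuous_const).pow i)).div_const _

lemma hasDerivAt_psiP (j : ℕ) (a : ℝ) (p : Polynomial ℝ) (t : ℝ) :
    HasDerivAt (psiP (j+1) a p) (psiP j a p.derivative t) t := by
  have h : ∀ i ∈ Finset.range (j+2), HasDerivAt
      (fun t => (Polynomial.derivative^[i] p).eval a * (t - a) ^ i / (i.factorial : ℝ))
      ((Polynomial.derivative^[i] p).eval a * (i * (t - a) ^ (i-1)) / (i.factorial : ℝ)) t := by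
    intro i _
    have h1 : HasDerivAt (fun t : ℝ => (t - a) ^ i) (i * (t - a) ^ (i-1)) t := by
      simpa [Function.comp_def] using ((hasDerivAt_pow i (t - a)).comp t ((hasDerivAt_id t).sub_const a))
    exact (h1.const_mul _).div_const _
  have hs := HasDerivAt.fun_sum h
  refine hs.congr_deriv (Eq.symm ?_)
  unfold psiP
  rw [Finset.sum_range_succ' (fun i => (Polynomial.derivative^[i] p).eval a * (↑i * (t - a) ^ (i-1)) / (i.factorial : ℝ))]
  simp only [Nat.cast_zero, pow_zero, Nat.factorial_zero, Nat.cast_one, zero_mul, mul_zero,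
    zero_div, add_zero]
  apply Finset.sum_congr rfl
  intro i _
  rw [Function.iterate_succ_apply, Nat.factorial_succ]
  have hne : ((i:ℝ)+1) ≠ 0 := by positivity
  push_cast
  field_simp

/-- Taylor remainder bound with an integral tail. -/
lemma taylor_rem (j : ℕ) (p : Polynomial ℝ) (a b : ℝ) (hab : a ≤ b) :
    ∀ t, a ≤ t → t ≤ b →
    |p.eval t - psiP j a p t| ≤ (t-a)^j / (j.factorial : ℝ) *
      ∫ u in a..b, |(Polynomial.derivative^[j+1] p).eval u| := by
  induction j generalizing p with
  | zero =>
    intro t h1 h2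
    have hftc : ∫ u in a..t, p.derivative.eval u = p.eval t - p.eval a := by
      apply intervalIntegral.integral_eq_sub_of_hasDerivAt (fun x _ => p.hasDerivAt x)
      exact (p.derivative.continuous).intervalIntegrable a t
    have h0 : psiP 0 a p t = p.eval a := by simp [psiP]
    have h3 : |∫ u in a..t, p.derivative.eval u| ≤ ∫ u in a..t, |p.derivative.eval u| :=
      intervalIntegral.abs_integral_le_integral_abs h1
    have h4 : (∫ u in a..t, |p.derivative.eval u|) ≤ ∫ u in a..b, |p.derivative.eval u| := by
      rw [← intervalIntegral.integral_add_adjacent_intervals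
        ((p.derivative.continuous).abs.intervalIntegrable a t)
        ((p.derivative.continuous).abs.intervalIntegrable t b)]
      have h5 : 0 ≤ ∫ u in t..b, |p.derivative.eval u| :=
        intervalIntegral.integral_nonneg h2 (fun u _ => abs_nonneg _)
      linarith
    rw [h0, ← hftc]
    simpa using h3.trans h4
  | succ j ih =>
    intro t h1 h2
    set J := ∫ u in a..b, |(Polynomial.derivative^[j+1+1] p).eval u| with hJ
    have hJ0 : 0 ≤ J := intervalIntegral.integral_nonneg hab (fun u _ => abs_nonneg _)
    have hG : ∀ x, HasDerivAt (fun t => p.eval t - psiP (j+1) a p t)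
        (p.derivative.eval x - psiP j a p.derivative x) x :=
      fun x => (p.hasDerivAt x).sub (hasDerivAt_psiP j a p x)
    have hcont : Continuous (fun x => p.derivative.eval x - psiP j a p.derivative x) :=
      (p.derivative.continuous).sub (continuous_psiP j a p.derivative)
    have hftc : ∫ u in a..t, (p.derivative.eval u - psiP j a p.derivative u)
        = (p.eval t - psiP (j+1) a p t) - (p.eval a - psiP (j+1) a p a) := by
      apply intervalIntegral.integral_eq_sub_of_hasDerivAt (fun x _ => hG x)
      exact hcont.intervalIntegrable a t
    rw [psiP_self, sub_self, sub_zero] at hftc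
    have hpoly : Polynomial.derivative^[j+1] p.derivative = Polynomial.derivative^[j+1+1] p := by
      rw [← Function.iterate_succ_apply]
    rw [← hftc]
    calc |∫ u in a..t, (p.derivative.eval u - psiP j a p.derivative u)|
        ≤ ∫ u in a..t, |p.derivative.eval u - psiP j a p.derivative u| :=
          intervalIntegral.abs_integral_le_integral_abs h1
    _ ≤ ∫ u in a..t, (u-a)^j / (j.factorial : ℝ) * J := by
        apply intervalIntegral.integral_mono_on h1 (hcont.abs.intervalIntegrable a t)
          (Continuous.intervalIntegrable (by fun_prop) a t)
        intro u hu
        have hih := ih p.derivative u hu.1 (le_trans hu.2 h2)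
        rwa [hpoly, ← hJ] at hih
    _ = (∫ u in a..t, (u-a)^j) / (j.factorial : ℝ) * J := by
        rw [intervalIntegral.integral_mul_const, intervalIntegral.integral_div]
    _ ≤ (t-a)^(j+1) / ((j+1).factorial : ℝ) * J := by
        apply le_of_eq
        have hpow : (∫ u in a..t, (u-a)^j) = (t-a)^(j+1) / ((j:ℝ)+1) := by
          have hcs := intervalIntegral.integral_comp_sub_right (fun x => x^j) a (a := a) (b := t)
          rw [hcs, sub_self, integral_pow]
          norm_num
        rw [hpow, Nat.factorial_succ, div_div]
        push_cast
        ring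

lemma volII : (volume II).toReal = 1 := by
  simp [II, Real.volume_Icc]
  norm_num

lemma measII : MeasurableSet II := measurableSet_Icc

/-- Pointwise Sobolev bound for polynomials on `II`. -/
lemma sobolev_pt (q : Polynomial ℝ) {a : ℝ} (ha : a ∈ II) :
    (q.eval a)^2 ≤ 2 * (∫ t in II, (q.eval t)^2) + ∫ t in II, (q.derivative.eval t)^2 := by
  set g : ℝ → ℝ := fun u => 2 * q.eval u * q.derivative.eval u with hg
  have hgc : Continuous g := by
    apply Continuous.mul
    · exact continuous_const.mul q.continuous
    · exact q.derivative.continuous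
  have hq2 : Continuous (fun u : ℝ => (q.eval u)^2) := q.continuous.pow 2
  have hq2' : Continuous (fun u : ℝ => (q.derivative.eval u)^2) := q.derivative.continuous.pow 2
  have hK : IntegrableOn (fun u => (q.eval u)^2 + (q.derivative.eval u)^2) II volume :=
    ((hq2.add hq2').integrableOn_Icc)
  set K : ℝ := ∫ u in II, ((q.eval u)^2 + (q.derivative.eval u)^2) with hKdef
  have habsK : ∀ t ∈ II, |∫ u in t..a, g u| ≤ K := by
    intro t ht
    have hsub : ∀ x y : ℝ, x ∈ II → y ∈ II → Set.Ioc x y ⊆ II := by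
      intro x y hx hy
      exact fun u hu => ⟨le_trans hx.1 (le_of_lt hu.1), le_trans hu.2 hy.2⟩
    have hmono : ∀ x y : ℝ, x ∈ II → y ∈ II → x ≤ y → (∫ u in Set.Ioc x y, |g u|) ≤ ∫ u in II, |g u| := by
      intro x y hx hy hxy
      apply setIntegral_mono_set hgc.abs.integrableOn_Icc
      · exact Filter.Eventually.of_forall fun u => abs_nonneg _
      · exact HasSubset.Subset.eventuallyLE (hsub x y hx hy)
    have habs2 : (∫ u in II, |g u|) ≤ K := by
      apply setIntegral_mono_on hgc.abs.integrableOn_Icc hK measII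
      intro u _
      have h2 : |g u| = 2 * |q.eval u| * |q.derivative.eval u| := by
        rw [hg]; rw [abs_mul, abs_mul]; simp [abs_of_nonneg]
      nlinarith [sq_nonneg (|q.eval u| - |q.derivative.eval u|), abs_nonneg (q.eval u),
        abs_nonneg (q.derivative.eval u), sq_abs (q.eval u), sq_abs (q.derivative.eval u)]
    rcases le_total t a with h|h
    · calc |∫ u in t..a, g u| ≤ ∫ u in t..a, |g u| := abs_integral_le_integral_abs h
      _ = ∫ u in Set.Ioc t a, |g u| := by rw [intervalIntegral.integral_of_le h]
      _ ≤ ∫ u in II, |g u| := hmono t a ht ha h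
      _ ≤ K := habs2
    · calc |∫ u in t..a, g u| = |∫ u in a..t, g u| := by rw [intervalIntegral.integral_symm]; rw [abs_neg]
      _ ≤ ∫ u in a..t, |g u| := abs_integral_le_integral_abs h
      _ = ∫ u in Set.Ioc a t, |g u| := by rw [intervalIntegral.integral_of_le h]
      _ ≤ ∫ u in II, |g u| := hmono a t ha ht h
      _ ≤ K := habs2
  have hstep1 : ∀ t ∈ II, (q.eval a)^2 ≤ (q.eval t)^2 + K := by
    intro t ht
    have hftc : ∫ u in t..a, g u = (q.eval a)^2 - (q.eval t)^2 := by
      apply intervalIntegral.integral_eq_sub_of_hasDerivAt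
      · intro x _
        simpa [hg, mul_comm, mul_assoc] using ((q.hasDerivAt x).fun_pow 2)
      · exact hgc.intervalIntegrable t a
    have := habsK t ht
    rw [hftc] at this
    have h1 := abs_le.mp this
    linarith [h1.1, h1.2]
  have i1 : IntegrableOn (fun t : ℝ => (q.eval t)^2) II volume := hq2.integrableOn_Icc
  have i2 : IntegrableOn (fun t : ℝ => (q.derivative.eval t)^2) II volume := hq2'.integrableOn_Icc
  have ic : ∀ c : ℝ, IntegrableOn (fun _t : ℝ => c) II volume :=
    fun c => integrableOn_const (by simp [II, Real.volume_Icc])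
  have hconst : (∫ _t in II, (q.eval a)^2) = (q.eval a)^2 := by
    rw [setIntegral_const, measureReal_def, volII, one_smul]
  have hmono2 : (∫ _t in II, (q.eval a)^2) ≤ ∫ t in II, ((q.eval t)^2 + K) := by
    apply setIntegral_mono_on (ic _) (i1.add (ic _)) measII
    exact hstep1
  have hsplit : (∫ t in II, ((q.eval t)^2 + K)) = (∫ t in II, (q.eval t)^2) + K := by
    rw [integral_add i1 (ic K), setIntegral_const, measureReal_def, volII, one_smul]
  have hKsplit : K = (∫ t in II, (q.eval t)^2) + ∫ t in II, (q.derivative.eval t)^2 := by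
    rw [hKdef, integral_add i1 i2]
  rw [hconst] at hmono2
  rw [hsplit, hKsplit] at hmono2
  linarith

lemma sob_term_nonneg (q : Polynomial ℝ) : 0 ≤ ∫ t in II, (q.eval t)^2 :=
  setIntegral_nonneg measII fun t _ => sq_nonneg _

lemma sobNormSq_nonneg (u : ℕ) (p : Polynomial ℝ) : 0 ≤ sobNormSq u p :=
  Finset.sum_nonneg fun _i _ => sob_term_nonneg _

lemma sob_term_le (u i : ℕ) (hi : i ∈ Finset.range (u+1)) (p : Polynomial ℝ) :
    (∫ t in II, ((Polynomial.derivative^[i] p).eval t)^2) ≤ sobNormSq u p :=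
  Finset.single_le_sum (fun i _ => sob_term_nonneg (Polynomial.derivative^[i] p)) hi

/-- Uniform bound on `psiP` over `II` via the Sobolev norm. -/
lemma psiP_sq_le (j : ℕ) (p : Polynomial ℝ) {a t : ℝ} (ha : a ∈ II) (ht : t ∈ II) :
    (psiP j a p t)^2 ≤ 3*(j+1)*sobNormSq (j+1) p := by
  set S := sobNormSq (j+1) p with hS
  have habs : |psiP j a p t| ≤ ∑ i ∈ Finset.range (j+1), |(Polynomial.derivative^[i] p).eval a| := by
    refine le_trans (Finset.abs_sum_le_sum_abs _ _) (Finset.sum_le_sum fun i _ => ?_)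
    have hta : |t - a| ≤ 1 := by
      rw [abs_le]
      constructor <;> [nlinarith [ha.1, ha.2, ht.1, ht.2]; nlinarith [ha.1, ha.2, ht.1, ht.2]]
    have h1 : |(t-a)^i| ≤ 1 := by
      rw [abs_pow]; exact pow_le_one₀ (abs_nonneg _) hta
    have h2 : (1:ℝ) ≤ (i.factorial : ℝ) := by exact_mod_cast i.factorial_pos
    rw [abs_div, abs_mul, abs_pow, Nat.abs_cast]
    calc |(Polynomial.derivative^[i] p).eval a| * |t-a|^i / (i.factorial : ℝ)
        ≤ |(Polynomial.derivative^[i] p).eval a| * 1 / 1 := by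
          apply div_le_div₀ (by positivity) ?_ (by norm_num) h2
          rw [← abs_pow]
          exact mul_le_mul_of_nonneg_left h1 (abs_nonneg _)
    _ = |(Polynomial.derivative^[i] p).eval a| := by ring
  have hsq : (psiP j a p t)^2 ≤ (∑ i ∈ Finset.range (j+1), |(Polynomial.derivative^[i] p).eval a|)^2 := by
    rw [← sq_abs]
    exact pow_le_pow_left₀ (abs_nonneg _) habs 2
  have hcs : (∑ i ∈ Finset.range (j+1), |(Polynomial.derivative^[i] p).eval a|)^2
      ≤ (j+1) * ∑ i ∈ Finset.range (j+1), ((Polynomial.derivative^[i] p).eval a)^2 := by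
    have := sq_sum_le_card_mul_sum_sq
      (s := Finset.range (j+1)) (f := fun i => |(Polynomial.derivative^[i] p).eval a|)
    simpa [sq_abs] using this
  have hsob : (∑ i ∈ Finset.range (j+1), ((Polynomial.derivative^[i] p).eval a)^2) ≤ 3*S := by
    have hterm : ∀ i ∈ Finset.range (j+1), ((Polynomial.derivative^[i] p).eval a)^2
        ≤ 2 * (∫ u in II, ((Polynomial.derivative^[i] p).eval u)^2)
          + ∫ u in II, ((Polynomial.derivative^[i+1] p).eval u)^2 := by
      intro i _
      rw [Function.iterate_succ_apply']
      exact sobolev_pt (Polynomial.derivative^[i] p) ha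
    calc ∑ i ∈ Finset.range (j+1), ((Polynomial.derivative^[i] p).eval a)^2
        ≤ ∑ i ∈ Finset.range (j+1), (2 * (∫ u in II, ((Polynomial.derivative^[i] p).eval u)^2)
          + ∫ u in II, ((Polynomial.derivative^[i+1] p).eval u)^2) := Finset.sum_le_sum hterm
    _ = 2 * (∑ i ∈ Finset.range (j+1), ∫ u in II, ((Polynomial.derivative^[i] p).eval u)^2)
          + ∑ i ∈ Finset.range (j+1), ∫ u in II, ((Polynomial.derivative^[i+1] p).eval u)^2 := by
        rw [Finset.sum_add_distrib, Finset.mul_sum]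
    _ ≤ 2*S + S := by
        apply add_le_add
        · apply mul_le_mul_of_nonneg_left _ (by norm_num)
          apply Finset.sum_le_sum_of_subset_of_nonneg
          · exact Finset.range_subset_range.2 (by omega)
          · exact fun i _ _ => sob_term_nonneg _
        · have hpeel : S = (∫ u in II, (p.eval u)^2)
              + ∑ i ∈ Finset.range (j+1), ∫ u in II, ((Polynomial.derivative^[i+1] p).eval u)^2 := by
            rw [hS]
            unfold sobNormSq
            rw [Finset.sum_range_succ' (fun i => ∫ t in II, ((Polynomial.derivative^[i] p).eval t) ^ 2)]
            simp [add_comm]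
          have := sob_term_nonneg p
          linarith [hpeel]
    _ = 3*S := by ring
  calc (psiP j a p t)^2 ≤ _ := hsq
  _ ≤ _ := hcs
  _ ≤ ((j:ℝ)+1) * (3*S) := by
      apply mul_le_mul_of_nonneg_left hsob (by positivity)
  _ = 3*(j+1)*S := by ring

end Aux


set_option maxHeartbeats 1000000 in
/-- The main per-interval estimate. -/
lemma interval_bound (j n : ℕ) (hn : 1 ≤ n) (τ : ℝ) (hτ : 0 < τ) (p : Polynomial ℝ)
    (i : ℕ) (hi : i < n) (Q : ℝ) (hQ0 : 0 ≤ Q)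
    (hpsiQ : ∀ k' ∈ Finset.Icc 1 n, ∀ t ∈ II, |psiP j (tk n (k'-1)) p t| ≤ Q) :
    (∫ t in Set.Ioc (tk n i) (tk n (i+1)), (p.eval t - Nnj n j τ p t)^2)
      ≤ 2*((1:ℝ)/n)^(2*j+2) * (∫ u in (tk n i)..(tk n (i+1)), ((Polynomial.derivative^[j+1] p).eval u)^2)
        + 8*Q^2*(n:ℝ)^2*τ := by
  have hn0 : (0:ℝ) < n := by exact_mod_cast hn
  set a := tk n i with ha
  set b := tk n (i+1) with hb
  have hd : b - a = 1/n := by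
    rw [ha, hb]; unfold tk
    have hne : (n:ℝ) ≠ 0 := ne_of_gt hn0
    push_cast
    field_simp
    ring
  have hab : a < b := by
    have : (0:ℝ) < 1/n := by positivity
    linarith [hd]
  have htkmono : ∀ {k l : ℕ}, k ≤ l → tk n k ≤ tk n l := by
    intro k l h
    unfold tk
    have hk : (k:ℝ) ≤ (l:ℝ) := by exact_mod_cast h
    have h2 : (k:ℝ)/n ≤ (l:ℝ)/n := by gcongr
    linarith
  have htkmem : ∀ k, k ≤ n → tk n k ∈ II := by
    intro k hk
    have h1 : 0 ≤ (k:ℝ)/n := by positivity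
    have h2 : (k:ℝ)/n ≤ 1 := by
      rw [div_le_one hn0]; exact_mod_cast hk
    unfold tk II
    constructor <;> [linarith; linarith]
  have htII : Set.Ioc a b ⊆ II := by
    intro t ht
    have h1 := htkmem i (by omega)
    have h2 := htkmem (i+1) (by omega)
    exact ⟨le_trans h1.1 ht.1.le, le_trans ht.2 h2.2⟩
  set f : ℝ → ℝ := fun u => (Polynomial.derivative^[j+1] p).eval u with hf
  have hfc : Continuous f := (Polynomial.derivative^[j+1] p).continuous
  have hfsq0 : 0 ≤ ∫ u in a..b, (f u)^2 :=
    intervalIntegral.integral_nonneg hab.le fun u _ => sq_nonneg _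
  set J := ∫ u in a..b, |f u| with hJ
  have hJ0 : 0 ≤ J := intervalIntegral.integral_nonneg hab.le fun u _ => abs_nonneg _
  have hcsJ : J^2 ≤ (1/n) * ∫ u in a..b, (f u)^2 := by
    have h := cs_int hab.le f hfc
    rwa [hd] at h
  set ind₁ : ℝ → ℝ := (Set.Icc a (a+τ)).indicator (fun _ => 1) with hi1
  set ind₂ : ℝ → ℝ := (Set.Icc (b-τ) b).indicator (fun _ => 1) with hi2
  have hind1 : ∀ t, 0 ≤ ind₁ t ∧ ind₁ t ≤ 1 := by
    intro t; rw [hi1]; unfold Set.indicator; split <;> norm_num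
  have hind2 : ∀ t, 0 ≤ ind₂ t ∧ ind₂ t ≤ 1 := by
    intro t; rw [hi2]; unfold Set.indicator; split <;> norm_num
  have hpt : ∀ t ∈ Set.Ioc a b, (p.eval t - Nnj n j τ p t)^2
      ≤ 2*((1/n:ℝ)^j * J)^2 + 4*Q^2*(n:ℝ)^2*(ind₁ t + ind₂ t) := by
    intro t ht
    have htmem := htII ht
    have hksplit : Nnj n j τ p t = psiP j a p t
        + ∑ k' ∈ (Finset.Icc 1 n).erase (i+1),
            psiP j (tk n (k'-1)) p t * trap τ (tk n (k'-1)) (tk n k') t := by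
      unfold Nnj
      rw [← Finset.add_sum_erase _ _ (show i+1 ∈ Finset.Icc 1 n by
        rw [Finset.mem_Icc]; omega)]
      congr 1
      have hii : (i+1) - 1 = i := by omega
      rw [hii, ← ha, ← hb, trap_eq_one hτ ht.1.le ht.2]
      ring
    set D := ∑ k' ∈ (Finset.Icc 1 n).erase (i+1),
        psiP j (tk n (k'-1)) p t * trap τ (tk n (k'-1)) (tk n k') t with hD
    have hR : |p.eval t - psiP j a p t| ≤ (1/n:ℝ)^j * J := by
      have h1 := taylor_rem j p a b hab.le t ht.1.le ht.2
      have h3 : (t-a)^j ≤ (1/n:ℝ)^j := by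
        apply pow_le_pow_left₀ (by linarith [ht.1]) (by linarith [ht.2, hd])
      have h4 : (1:ℝ) ≤ (j.factorial : ℝ) := by exact_mod_cast j.factorial_pos
      have h2 : (t-a)^j / (j.factorial : ℝ) ≤ (1/n:ℝ)^j := by
        have h5 : (t-a)^j / (j.factorial:ℝ) ≤ (t-a)^j := by
          apply div_le_self (pow_nonneg (by linarith [ht.1]) j) h4
        calc (t-a)^j / (j.factorial:ℝ) ≤ (t-a)^j := h5
        _ ≤ (1/n:ℝ)^j := h3
      calc |p.eval t - psiP j a p t| ≤ (t-a)^j / (j.factorial : ℝ) * J := h1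
      _ ≤ (1/n:ℝ)^j * J := mul_le_mul_of_nonneg_right h2 hJ0
    have hDb : |D| ≤ Q * n * (ind₁ t + ind₂ t) := by
      have hterm : ∀ k' ∈ (Finset.Icc 1 n).erase (i+1),
          |psiP j (tk n (k'-1)) p t * trap τ (tk n (k'-1)) (tk n k') t|
            ≤ Q * (ind₁ t + ind₂ t) := by
        intro k' hk'
        obtain ⟨hne, hmem⟩ := Finset.mem_erase.mp hk'
        have hmem' := Finset.mem_Icc.mp hmem
        have hk1 : tk n (k'-1) ≤ tk n k' := htkmono (by omega)
        have hTnn : 0 ≤ trap τ (tk n (k'-1)) (tk n k') t := trap_nonneg hτ (by linarith) t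
        have hT1 : trap τ (tk n (k'-1)) (tk n k') t ≤ 1 := trap_le_one hτ t
        have hpsi := hpsiQ k' hmem t htmem
        have hkey : trap τ (tk n (k'-1)) (tk n k') t ≤ ind₁ t + ind₂ t := by
          rcases lt_or_gt_of_ne hne with hlt | hgt
          · have hk'le : tk n k' ≤ a := by rw [ha]; exact htkmono (by omega)
            by_cases hta : t ≤ a + τ
            · have h1 : ind₁ t = 1 := by
                rw [hi1, Set.indicator_of_mem (Set.mem_Icc.mpr ⟨ht.1.le, hta⟩)]
              rw [h1]
              linarith [(hind2 t).1]
            · push_neg at hta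
              rw [trap_eq_zero_right hτ hk1 (by linarith)]
              linarith [(hind1 t).1, (hind2 t).1]
          · have hk'ge : b ≤ tk n (k'-1) := by rw [hb]; exact htkmono (by omega)
            by_cases htb : b - τ ≤ t
            · have h1 : ind₂ t = 1 := by
                rw [hi2, Set.indicator_of_mem (Set.mem_Icc.mpr ⟨htb, ht.2⟩)]
              rw [h1]
              linarith [(hind1 t).1]
            · push_neg at htb
              rw [trap_eq_zero_left hτ.le hk1 (by linarith)]
              linarith [(hind1 t).1, (hind2 t).1]
        rw [abs_mul, abs_of_nonneg hTnn]
        calc |psiP j (tk n (k'-1)) p t| * trap τ (tk n (k'-1)) (tk n k') t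
            ≤ Q * trap τ (tk n (k'-1)) (tk n k') t := mul_le_mul_of_nonneg_right hpsi hTnn
        _ ≤ Q * (ind₁ t + ind₂ t) := mul_le_mul_of_nonneg_left hkey hQ0
      have hX0 : 0 ≤ ind₁ t + ind₂ t := by linarith [(hind1 t).1, (hind2 t).1]
      have hcard : (((Finset.Icc 1 n).erase (i+1)).card : ℝ) ≤ n := by
        have h1 : ((Finset.Icc 1 n).erase (i+1)).card ≤ (Finset.Icc 1 n).card :=
          Finset.card_erase_le
        have h2 : (Finset.Icc 1 n).card = n := by rw [Nat.card_Icc]; omega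
        exact_mod_cast h1.trans_eq h2
      calc |D| ≤ ∑ k' ∈ (Finset.Icc 1 n).erase (i+1),
          |psiP j (tk n (k'-1)) p t * trap τ (tk n (k'-1)) (tk n k') t| :=
            Finset.abs_sum_le_sum_abs _ _
      _ ≤ ∑ _k' ∈ (Finset.Icc 1 n).erase (i+1), Q * (ind₁ t + ind₂ t) :=
            Finset.sum_le_sum hterm
      _ = (((Finset.Icc 1 n).erase (i+1)).card : ℝ) * (Q * (ind₁ t + ind₂ t)) := by
            rw [Finset.sum_const, nsmul_eq_mul]
      _ ≤ (n:ℝ) * (Q * (ind₁ t + ind₂ t)) :=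
            mul_le_mul_of_nonneg_right hcard (mul_nonneg hQ0 hX0)
      _ = Q * n * (ind₁ t + ind₂ t) := by ring
    have hEabs : |p.eval t - Nnj n j τ p t| ≤ (1/n:ℝ)^j * J + Q*n*(ind₁ t + ind₂ t) := by
      rw [hksplit]
      have hsplit2 : p.eval t - (psiP j a p t + D) = (p.eval t - psiP j a p t) - D := by ring
      rw [hsplit2]
      calc |(p.eval t - psiP j a p t) - D| ≤ |p.eval t - psiP j a p t| + |D| := abs_sub _ _
      _ ≤ _ := add_le_add hR hDb
    set A := (1/n:ℝ)^j * J with hA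
    set X := ind₁ t + ind₂ t with hX
    have hA0 : 0 ≤ A := by positivity
    have hX0 : 0 ≤ X := by rw [hX]; linarith [(hind1 t).1, (hind2 t).1]
    have hXsq : X^2 ≤ 2*X := by
      rw [hX]
      nlinarith [(hind1 t).1, (hind1 t).2, (hind2 t).1, (hind2 t).2]
    have hE2 : (p.eval t - Nnj n j τ p t)^2 ≤ (A + Q*n*X)^2 := by
      rw [← sq_abs]
      exact pow_le_pow_left₀ (abs_nonneg _) hEabs 2
    have hexp : (A + Q*n*X)^2 ≤ 2*A^2 + 2*(Q*n*X)^2 := by nlinarith [sq_nonneg (A - Q*n*X)]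
    have hfin : 2*(Q*(n:ℝ)*X)^2 ≤ 4*Q^2*(n:ℝ)^2*X := by
      have h1 : 2*(Q*(n:ℝ)*X)^2 = 2*Q^2*(n:ℝ)^2 * X^2 := by ring
      have h2 : 2*Q^2*(n:ℝ)^2 * X^2 ≤ 2*Q^2*(n:ℝ)^2 * (2*X) :=
        mul_le_mul_of_nonneg_left hXsq (by positivity)
      calc 2*(Q*(n:ℝ)*X)^2 = 2*Q^2*(n:ℝ)^2 * X^2 := h1
      _ ≤ 2*Q^2*(n:ℝ)^2 * (2*X) := h2
      _ = 4*Q^2*(n:ℝ)^2*X := by ring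
    calc (p.eval t - Nnj n j τ p t)^2 ≤ (A + Q*n*X)^2 := hE2
    _ ≤ 2*A^2 + 2*(Q*n*X)^2 := hexp
    _ ≤ 2*A^2 + 4*Q^2*(n:ℝ)^2*X := by linarith [hfin]
  -- integrate the pointwise bound
  have hEc : Continuous (fun t => p.eval t - Nnj n j τ p t) := by
    apply p.continuous.sub
    unfold Nnj
    exact continuous_finset_sum _ fun k _ => (continuous_psiP _ _ _).mul (continuous_trap _ _ _)
  have hio : IntegrableOn (fun t => (p.eval t - Nnj n j τ p t)^2) (Set.Ioc a b) volume :=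
    (hEc.pow 2).integrableOn_Ioc
  have hind_int : ∀ (c d : ℝ), IntegrableOn ((Set.Icc c d).indicator (fun _ => (1:ℝ)))
      (Set.Ioc a b) volume := by
    intro c d
    rw [IntegrableOn, integrable_indicator_iff measurableSet_Icc]
    refine integrableOn_const ?_
    rw [Measure.restrict_apply measurableSet_Icc]
    exact (lt_of_le_of_lt (measure_mono Set.inter_subset_right) measure_Ioc_lt_top).ne
  have hconst_int : ∀ c : ℝ, IntegrableOn (fun _t : ℝ => c) (Set.Ioc a b) volume :=
    fun c => integrableOn_const measure_Ioc_lt_top.ne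
  have hsum_int : IntegrableOn (fun t => 4*Q^2*(n:ℝ)^2*(ind₁ t + ind₂ t)) (Set.Ioc a b) volume := by
    rw [hi1, hi2]
    exact (((hind_int a (a+τ)).add (hind_int (b-τ) b)).const_mul _)
  have hRHSint : IntegrableOn (fun t => 2*((1/n:ℝ)^j * J)^2 + 4*Q^2*(n:ℝ)^2*(ind₁ t + ind₂ t))
      (Set.Ioc a b) volume := (hconst_int _).add hsum_int
  have hmono := setIntegral_mono_on hio hRHSint measurableSet_Ioc hpt
  have hvol : (volume (Set.Ioc a b)).toReal = 1/n := by
    rw [Real.volume_Ioc, hd, ENNReal.toReal_ofReal (by positivity)]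
  have hind_le : ∀ (c d : ℝ), c ≤ d →
      (∫ t in Set.Ioc a b, (Set.Icc c d).indicator (fun _ => (1:ℝ)) t) ≤ d - c := by
    intro c d hcd
    rw [setIntegral_indicator measurableSet_Icc, setIntegral_const, smul_eq_mul, mul_one]
    calc (volume (Set.Ioc a b ∩ Set.Icc c d)).toReal ≤ (volume (Set.Icc c d)).toReal := by
          apply ENNReal.toReal_mono (by rw [Real.volume_Icc]; exact ENNReal.ofReal_ne_top)
          exact measure_mono Set.inter_subset_right
    _ = d - c := by rw [Real.volume_Icc, ENNReal.toReal_ofReal (by linarith)]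
  have hind1_nonneg : ∀ t, (0:ℝ) ≤ ind₁ t := fun t => (hind1 t).1
  have hRHSval : (∫ t in Set.Ioc a b, (2*((1/n:ℝ)^j * J)^2 + 4*Q^2*(n:ℝ)^2*(ind₁ t + ind₂ t)))
      ≤ (1/n) * (2*((1/n:ℝ)^j * J)^2) + 4*Q^2*(n:ℝ)^2*(τ + τ) := by
    rw [integral_add (hconst_int _) hsum_int]
    apply add_le_add
    · rw [setIntegral_const, measureReal_def, hvol, smul_eq_mul]
    · have hii : (∫ t in Set.Ioc a b, 4*Q^2*(n:ℝ)^2*(ind₁ t + ind₂ t))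
          = 4*Q^2*(n:ℝ)^2 * ∫ t in Set.Ioc a b, (ind₁ t + ind₂ t) := by
        rw [← MeasureTheory.integral_const_mul]
      rw [hii]
      have hsum : (∫ t in Set.Ioc a b, (ind₁ t + ind₂ t)) ≤ τ + τ := by
        rw [integral_add (by rw [hi1]; exact hind_int a (a+τ)) (by rw [hi2]; exact hind_int (b-τ) b)]
        apply add_le_add
        · have := hind_le a (a+τ) (by linarith)
          rw [hi1]
          simpa using this
        · have := hind_le (b-τ) b (by linarith)
          rw [hi2]
          simpa using this
      exact mul_le_mul_of_nonneg_left hsum (by positivity)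
  have hmain : (∫ t in Set.Ioc a b, (p.eval t - Nnj n j τ p t)^2)
      ≤ (1/n) * (2*((1/n:ℝ)^j * J)^2) + 4*Q^2*(n:ℝ)^2*(τ + τ) := le_trans hmono hRHSval
  have hJterm : (1/n) * (2*((1/n:ℝ)^j * J)^2) ≤ 2*((1:ℝ)/n)^(2*j+2) * ∫ u in a..b, (f u)^2 := by
    have h1 : (1/(n:ℝ)) * (2*((1/n:ℝ)^j * J)^2) = 2 * (1/n:ℝ)^(2*j+1) * J^2 := by ring
    have h2 : 2 * (1/n:ℝ)^(2*j+1) * J^2 ≤ 2 * (1/n:ℝ)^(2*j+1) * ((1/n) * ∫ u in a..b, (f u)^2) :=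
      mul_le_mul_of_nonneg_left hcsJ (by positivity)
    calc (1/(n:ℝ)) * (2*((1/n:ℝ)^j * J)^2) = 2 * (1/n:ℝ)^(2*j+1) * J^2 := h1
    _ ≤ 2 * (1/n:ℝ)^(2*j+1) * ((1/n) * ∫ u in a..b, (f u)^2) := h2
    _ = 2*((1:ℝ)/n)^(2*j+2) * ∫ u in a..b, (f u)^2 := by ring
  calc (∫ t in Set.Ioc a b, (p.eval t - Nnj n j τ p t)^2)
      ≤ (1/n) * (2*((1/n:ℝ)^j * J)^2) + 4*Q^2*(n:ℝ)^2*(τ + τ) := hmain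
  _ ≤ 2*((1:ℝ)/n)^(2*j+2) * (∫ u in a..b, (f u)^2) + 8*Q^2*(n:ℝ)^2*τ := by
      have := hJterm
      linarith

set_option maxHeartbeats 2000000 in
theorem stmt9 (j : ℕ) :
    ∃ C₄ : ℝ, 0 < C₄ ∧ ∀ n s : ℕ, 1 ≤ n → 1 ≤ s → s ≤ n → ∀ τ : ℝ, 0 < τ →
      τ ≤ (n : ℝ) ^ (-(4 * (j : ℤ)) - 5) → ∀ p : Polynomial ℝ, p.natDegree ≤ s →
      (∫ t in II, (p.eval t - Nnj n j τ p t) ^ 2)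
        ≤ C₄ * (n : ℝ) ^ (-(2 * (j : ℤ)) - 2) * sobNormSq (j + 1) p := by
  refine ⟨2 + 24*((j:ℝ)+1), by positivity, ?_⟩
  intro n s hn _hs _hsn τ hτ hτle p _hp
  have hn0 : (0:ℝ) < n := by exact_mod_cast hn
  have hn1 : (1:ℝ) ≤ n := by exact_mod_cast hn
  have hne : (n:ℝ) ≠ 0 := ne_of_gt hn0
  set S := sobNormSq (j+1) p with hSdef
  have hS0 : 0 ≤ S := sobNormSq_nonneg _ _
  set f : ℝ → ℝ := fun u => (Polynomial.derivative^[j+1] p).eval u with hfdef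
  have hfc : Continuous f := (Polynomial.derivative^[j+1] p).continuous
  have hfS : (∫ u in II, (f u)^2) ≤ S := sob_term_le (j+1) (j+1) (by simp) p
  set Q := Real.sqrt (3*((j:ℝ)+1)*S) with hQdef
  have hQ0 : 0 ≤ Q := Real.sqrt_nonneg _
  have hQsq : Q^2 = 3*((j:ℝ)+1)*S := Real.sq_sqrt (by positivity)
  have htkmem : ∀ k, k ≤ n → tk n k ∈ II := by
    intro k hk
    have h1 : 0 ≤ (k:ℝ)/n := by positivity
    have h2 : (k:ℝ)/n ≤ 1 := by
      rw [div_le_one hn0]; exact_mod_cast hk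
    unfold tk II
    constructor <;> [linarith; linarith]
  have hpsiQ : ∀ k' ∈ Finset.Icc 1 n, ∀ t ∈ II, |psiP j (tk n (k'-1)) p t| ≤ Q := by
    intro k' hk' t ht
    have hk'' := Finset.mem_Icc.mp hk'
    have hmem := htkmem (k'-1) (by omega)
    have h1 := psiP_sq_le j p hmem ht
    rw [← Real.sqrt_sq_eq_abs, hQdef]
    exact Real.sqrt_le_sqrt h1
  have hEc : Continuous (fun t => p.eval t - Nnj n j τ p t) := by
    apply p.continuous.sub
    unfold Nnj
    exact continuous_finset_sum _ fun k _ => (continuous_psiP _ _ _).mul (continuous_trap _ _ _)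
  have h0' : tk n 0 = -(1/2) := by unfold tk; norm_num
  have h1' : tk n n = 1/2 := by unfold tk; rw [div_self hne]; norm_num
  have htkmono : ∀ {k l : ℕ}, k ≤ l → tk n k ≤ tk n l := by
    intro k l h
    unfold tk
    have hk : (k:ℝ) ≤ (l:ℝ) := by exact_mod_cast h
    have h2 : (k:ℝ)/n ≤ (l:ℝ)/n := by gcongr
    linarith
  have hsplit : (∫ t in II, (p.eval t - Nnj n j τ p t)^2)
      = ∑ i ∈ Finset.range n, ∫ t in (tk n i)..(tk n (i+1)), (p.eval t - Nnj n j τ p t)^2 := by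
    rw [intervalIntegral.sum_integral_adjacent_intervals
      (fun k _ => (((hEc.fun_pow 2)).intervalIntegrable (tk n k) (tk n (k+1))))]
    rw [h0', h1', intervalIntegral.integral_of_le (by norm_num : (-(1/2):ℝ) ≤ 1/2)]
    unfold II
    exact integral_Icc_eq_integral_Ioc
  have hsumf : (∑ i ∈ Finset.range n, ∫ u in (tk n i)..(tk n (i+1)), (f u)^2)
      = ∫ u in II, (f u)^2 := by
    rw [intervalIntegral.sum_integral_adjacent_intervals
      (fun k _ => (((hfc.fun_pow 2)).intervalIntegrable (tk n k) (tk n (k+1))))]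
    rw [h0', h1', intervalIntegral.integral_of_le (by norm_num : (-(1/2):ℝ) ≤ 1/2)]
    unfold II
    exact integral_Icc_eq_integral_Ioc.symm
  set e := (n:ℝ)^(-(2*(j:ℤ))-2) with hedef
  have he0 : 0 < e := by
    rw [hedef]
    exact zpow_pos hn0 _
  have hpow_eq : ((1:ℝ)/n)^(2*j+2) = e := by
    rw [hedef]
    have hz : (-(2*(j:ℤ))-2) = -((2*j+2 : ℕ) : ℤ) := by push_cast; ring
    rw [hz, zpow_neg, zpow_natCast, one_div, inv_pow]
  have hIb : ∀ i ∈ Finset.range n, (∫ t in (tk n i)..(tk n (i+1)), (p.eval t - Nnj n j τ p t)^2)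
      ≤ 2*((1:ℝ)/n)^(2*j+2) * (∫ u in (tk n i)..(tk n (i+1)), (f u)^2) + 8*Q^2*(n:ℝ)^2*τ := by
    intro i hi
    have hile := Finset.mem_range.mp hi
    rw [intervalIntegral.integral_of_le (htkmono (Nat.le_succ i))]
    exact interval_bound j n hn τ hτ p i hile Q hQ0 hpsiQ
  rw [hsplit]
  calc (∑ i ∈ Finset.range n, ∫ t in (tk n i)..(tk n (i+1)), (p.eval t - Nnj n j τ p t)^2)
      ≤ ∑ i ∈ Finset.range n, (2*((1:ℝ)/n)^(2*j+2) * (∫ u in (tk n i)..(tk n (i+1)), (f u)^2)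
          + 8*Q^2*(n:ℝ)^2*τ) := Finset.sum_le_sum hIb
  _ = 2*((1:ℝ)/n)^(2*j+2) * (∑ i ∈ Finset.range n, ∫ u in (tk n i)..(tk n (i+1)), (f u)^2)
          + (n:ℝ)*(8*Q^2*(n:ℝ)^2*τ) := by
      rw [Finset.sum_add_distrib, ← Finset.mul_sum, Finset.sum_const, Finset.card_range,
        nsmul_eq_mul]
  _ ≤ (2 + 24*((j:ℝ)+1)) * e * S := by
      rw [hsumf, hpow_eq]
      have hA : 2*e*(∫ u in II, (f u)^2) ≤ 2*e*S :=
        mul_le_mul_of_nonneg_left hfS (by positivity)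
      have hzz : (-(4*(j:ℤ))-2) ≤ (-(2*(j:ℤ))-2) := by
        have := Int.natCast_nonneg j
        linarith
      have h2z : (n:ℝ)^(-(4*(j:ℤ))-2) ≤ e := by
        rw [hedef]
        exact zpow_le_zpow_right₀ hn1 hzz
      have h1z : (n:ℝ)^(3:ℕ) * (n:ℝ)^(-(4*(j:ℤ))-5) = (n:ℝ)^(-(4*(j:ℤ))-2) := by
        rw [← zpow_natCast (n:ℝ) 3, ← zpow_add₀ hne]
        congr 1
        ring
      have hb1 : (n:ℝ)*((n:ℝ)^2*τ) ≤ e := by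
        calc (n:ℝ)*((n:ℝ)^2*τ) = (n:ℝ)^(3:ℕ)*τ := by ring
        _ ≤ (n:ℝ)^(3:ℕ) * (n:ℝ)^(-(4*(j:ℤ))-5) :=
            mul_le_mul_of_nonneg_left hτle (by positivity)
        _ = (n:ℝ)^(-(4*(j:ℤ))-2) := h1z
        _ ≤ e := h2z
      have hB : (n:ℝ)*(8*Q^2*(n:ℝ)^2*τ) ≤ 8*Q^2*e := by
        calc (n:ℝ)*(8*Q^2*(n:ℝ)^2*τ) = 8*Q^2*((n:ℝ)*((n:ℝ)^2*τ)) := by ring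
        _ ≤ 8*Q^2*e := mul_le_mul_of_nonneg_left hb1 (by positivity)
      calc 2*e*(∫ u in II, (f u)^2) + (n:ℝ)*(8*Q^2*(n:ℝ)^2*τ)
          ≤ 2*e*S + 8*Q^2*e := add_le_add hA hB
      _ = (2 + 24*((j:ℝ)+1)) * e * S := by rw [hQsq]; ring
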